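/- (Characterization of simultaneously Hamiltonian matrices.) A 4n×4n real matrix A satisfies both Aᵀ𝕀 + 𝕀A = 0 and Aᵀ𝕁 + 𝕁A = 0 if and only if there exist a Hamiltonian 2n×2n real matrix R (RᵀJ + JR = 0) and a symmetric 2n×2n real matrix S such that A is the block matrix A = [[R, S],[−J S J, −Rᵀ]]. -/

import Mathlib

open Matrix

/-- The standard 2n×2n symplectic matrix `J = [[0, I],[−I, 0]]`. -/
def Jstd (n : ℕ) : Matrix (Fin n ⊕ Fin n) (Fin n ⊕ Fin n) ℝ :=
  Matrix.fromBlocks 0 1 (-1) 0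

/-- The 4n×4n matrix `𝕀 = [[0, −I_{2n}],[I_{2n}, 0]]`. -/
def bbI (n : ℕ) :
    Matrix ((Fin n ⊕ Fin n) ⊕ (Fin n ⊕ Fin n)) ((Fin n ⊕ Fin n) ⊕ (Fin n ⊕ Fin n)) ℝ :=
  Matrix.fromBlocks 0 (-1) 1 0

/-- The 4n×4n matrix `𝕁 = [[J, 0],[0, Jᵀ]]`. -/
def bbJ (n : ℕ) :
    Matrix ((Fin n ⊕ Fin n) ⊕ (Fin n ⊕ Fin n)) ((Fin n ⊕ Fin n) ⊕ (Fin n ⊕ Fin n)) ℝ :=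
  Matrix.fromBlocks (Jstd n) 0 0 (Jstd n)ᵀ

/-- The 4n×4n matrix `𝕂 = [[0, J],[J, 0]]`. -/
def bbK (n : ℕ) :
    Matrix ((Fin n ⊕ Fin n) ⊕ (Fin n ⊕ Fin n)) ((Fin n ⊕ Fin n) ⊕ (Fin n ⊕ Fin n)) ℝ :=
  Matrix.fromBlocks 0 (Jstd n) (Jstd n) 0

/-!
Write `A = [[a, b], [c, d]]`. Since `𝕀` is Mathlib's `Matrix.J`, skew-adjointness for `𝕀` says
exactly that `b` and `c` are symmetric and `d = -aᵀ`. As `𝕁` is block diagonal, skew-adjointness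
for `𝕁` splits into four block equations: `a` and `d` are `J`-Hamiltonian, `cJ = Jb` and
`bJ = Jc`. Because `J² = -1`, the relation `cJ = Jb` says `c = -JbJ`; once `b` is symmetric this
`c` is symmetric, `bJ = Jc` holds, and `d = -aᵀ` is `J`-Hamiltonian whenever `a` is.
-/

namespace Matrix

variable {R m n : Type*} [CommRing R] [Fintype m] [Fintype n]

theorem isSkewAdjoint_iff_transpose_mul_add_mul_eq_zero (J A : Matrix m m R) :
    J.IsSkewAdjoint A ↔ Aᵀ * J + J * A = 0 := by
  rw [Matrix.IsSkewAdjoint, IsAdjointPair, Matrix.mul_neg, eq_neg_iff_add_eq_zero]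

theorem isSkewAdjoint_neg_left_iff (J A : Matrix m m R) :
    (-J).IsSkewAdjoint A ↔ J.IsSkewAdjoint A := by
  simp only [Matrix.IsSkewAdjoint, IsAdjointPair, Matrix.mul_neg, Matrix.neg_mul, neg_inj]

theorem isSkewAdjoint_J_fromBlocks_iff [DecidableEq m] {a b c d : Matrix m m R} :
    (J m R).IsSkewAdjoint (fromBlocks a b c d) ↔ bᵀ = b ∧ cᵀ = c ∧ d = -aᵀ := by
  simp only [Matrix.IsSkewAdjoint, IsAdjointPair, J, fromBlocks_transpose, fromBlocks_neg,
    fromBlocks_multiply, fromBlocks_inj, Matrix.mul_zero, Matrix.zero_mul, Matrix.mul_one,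
    Matrix.one_mul, Matrix.mul_neg, Matrix.neg_mul, neg_zero, zero_add, add_zero, neg_neg, neg_inj]
  constructor
  · rintro ⟨hc, hd, -, hb⟩
    exact ⟨hb, hc, hd.symm⟩
  · rintro ⟨hb, hc, rfl⟩
    exact ⟨hc, rfl, by rw [transpose_neg, transpose_transpose], hb⟩

theorem isSkewAdjoint_fromBlocks_diagonal_iff (P : Matrix m m R) (Q : Matrix n n R)
    {a : Matrix m m R} {b : Matrix m n R} {c : Matrix n m R} {d : Matrix n n R} :
    (fromBlocks P 0 0 Q).IsSkewAdjoint (fromBlocks a b c d) ↔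
      P.IsSkewAdjoint a ∧ IsAdjointPair P Q c (-b) ∧ IsAdjointPair Q P b (-c) ∧
        Q.IsSkewAdjoint d := by
  simp only [Matrix.IsSkewAdjoint, IsAdjointPair, fromBlocks_transpose, fromBlocks_neg,
    fromBlocks_multiply, fromBlocks_inj, Matrix.mul_zero, Matrix.zero_mul, zero_add, add_zero]

theorem transpose_neg_mul_mul {Ω : Matrix m m R} (hΩt : Ωᵀ = -Ω) (b : Matrix m m R)
    (hb : bᵀ = b) :
    (-(Ω * b * Ω))ᵀ = -(Ω * b * Ω) := by
  simp only [transpose_neg, transpose_mul, hΩt, hb, Matrix.neg_mul, Matrix.mul_neg, neg_neg,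
    Matrix.mul_assoc]

section ComplexStructure

variable [DecidableEq m] {Ω : Matrix m m R}

theorem IsSkewAdjoint.neg_transpose (hΩ : Ω * Ω = -1) {a : Matrix m m R}
    (ha : Ω.IsSkewAdjoint a) : Ω.IsSkewAdjoint (-aᵀ) := by
  rw [isSkewAdjoint_iff_transpose_mul_add_mul_eq_zero] at ha ⊢
  calc (-aᵀ)ᵀ * Ω + Ω * -aᵀ = Ω * (aᵀ * Ω + Ω * a) * Ω := by
        simp only [transpose_neg, transpose_transpose, Matrix.mul_add, Matrix.add_mul,
          Matrix.mul_assoc, hΩ, ← Matrix.mul_assoc Ω Ω, Matrix.mul_neg, Matrix.neg_mul,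
          Matrix.mul_one, Matrix.one_mul]
        abel
    _ = 0 := by rw [ha, Matrix.mul_zero, Matrix.zero_mul]

theorem isAdjointPair_transpose_iff_eq_neg_mul_mul (hΩt : Ωᵀ = -Ω) (hΩ : Ω * Ω = -1)
    {b c : Matrix m m R} (hc : cᵀ = c) :
    IsAdjointPair Ω Ωᵀ c (-b) ↔ c = -(Ω * b * Ω) := by
  rw [IsAdjointPair, hΩt, hc, Matrix.mul_neg, Matrix.mul_neg, neg_inj]
  constructor
  · intro h
    rw [← h, Matrix.mul_assoc, hΩ, Matrix.mul_neg, Matrix.mul_one, neg_neg]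
  · rintro rfl
    rw [Matrix.neg_mul, Matrix.mul_assoc, hΩ, Matrix.mul_neg, Matrix.mul_one, neg_neg]

theorem isAdjointPair_transpose_mul_mul (hΩt : Ωᵀ = -Ω) (hΩ : Ω * Ω = -1)
    (b : Matrix m m R) (hb : bᵀ = b) : IsAdjointPair Ωᵀ Ω b (Ω * b * Ω) := by
  rw [IsAdjointPair, hΩt, hb, Matrix.neg_mul, ← Matrix.mul_assoc, ← Matrix.mul_assoc,
    hΩ, Matrix.neg_mul, Matrix.one_mul, Matrix.neg_mul, neg_neg]

theorem isSkewAdjoint_J_and_fromBlocks_diagonal_iff (hΩt : Ωᵀ = -Ω) (hΩ : Ω * Ω = -1)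
    {a b c d : Matrix m m R} :
    (J m R).IsSkewAdjoint (fromBlocks a b c d) ∧
        (fromBlocks Ω 0 0 Ωᵀ).IsSkewAdjoint (fromBlocks a b c d) ↔
      Ω.IsSkewAdjoint a ∧ bᵀ = b ∧ c = -(Ω * b * Ω) ∧ d = -aᵀ := by
  rw [isSkewAdjoint_J_fromBlocks_iff, isSkewAdjoint_fromBlocks_diagonal_iff, hΩt,
    isSkewAdjoint_neg_left_iff, ← hΩt]
  constructor
  · rintro ⟨⟨hb, hc, hd⟩, ha, hcb, -, -⟩
    exact ⟨ha, hb, (isAdjointPair_transpose_iff_eq_neg_mul_mul hΩt hΩ hc).1 hcb, hd⟩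
  · rintro ⟨ha, hb, rfl, rfl⟩
    have hc := transpose_neg_mul_mul hΩt b hb
    exact ⟨⟨hb, hc, rfl⟩, ha, (isAdjointPair_transpose_iff_eq_neg_mul_mul hΩt hΩ hc).2 rfl,
      by rw [neg_neg]; exact isAdjointPair_transpose_mul_mul hΩt hΩ b hb,
      ha.neg_transpose hΩ⟩

end ComplexStructure

end Matrix

theorem Jstd_eq_neg_J (n : ℕ) : Jstd n = -J (Fin n) ℝ := by
  rw [Jstd, J, fromBlocks_neg, neg_zero, neg_neg]

theorem Jstd_transpose (n : ℕ) : (Jstd n)ᵀ = -Jstd n := by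
  rw [Jstd_eq_neg_J, transpose_neg, J_transpose]

theorem Jstd_mul_Jstd (n : ℕ) : Jstd n * Jstd n = -1 := by
  rw [Jstd_eq_neg_J, neg_mul_neg, J_squared]

theorem doubly_hamiltonian_iff_general (n : ℕ)
    (A : Matrix ((Fin n ⊕ Fin n) ⊕ (Fin n ⊕ Fin n)) ((Fin n ⊕ Fin n) ⊕ (Fin n ⊕ Fin n)) ℝ) :
    (Aᵀ * bbI n + bbI n * A = 0 ∧ Aᵀ * bbJ n + bbJ n * A = 0) ↔
      ∃ R S : Matrix (Fin n ⊕ Fin n) (Fin n ⊕ Fin n) ℝ,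
        Rᵀ * Jstd n + Jstd n * R = 0 ∧ Sᵀ = S ∧
        A = Matrix.fromBlocks R S (-(Jstd n * S * Jstd n)) (-Rᵀ) := by
  obtain ⟨a, b, c, d, rfl⟩ : ∃ a b c d, A = fromBlocks a b c d :=
    ⟨_, _, _, _, (fromBlocks_toBlocks A).symm⟩
  have hbbI : bbI n = J (Fin n ⊕ Fin n) ℝ := rfl
  simp only [← isSkewAdjoint_iff_transpose_mul_add_mul_eq_zero, hbbI, bbJ, fromBlocks_inj,
    isSkewAdjoint_J_and_fromBlocks_diagonal_iff (Jstd_transpose n) (Jstd_mul_Jstd n)]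
  constructor
  · rintro ⟨ha, hb, hc, hd⟩
    exact ⟨a, b, ha, hb, rfl, rfl, hc, hd⟩
  · rintro ⟨R, S, hR, hS, rfl, rfl, rfl, rfl⟩
    exact ⟨hR, hS, rfl, rfl⟩

/-- `A` is Hamiltonian for both `ω_𝕀` and `ω_𝕁` iff it is of the block
form `[[R, S],[−JSJ, −Rᵀ]]` with `R` Hamiltonian and `S` symmetric. -/
theorem doubly_hamiltonian_iff (n : ℕ) (hn : 1 ≤ n)
    (A : Matrix ((Fin n ⊕ Fin n) ⊕ (Fin n ⊕ Fin n)) ((Fin n ⊕ Fin n) ⊕ (Fin n ⊕ Fin n)) ℝ) :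
    (Aᵀ * bbI n + bbI n * A = 0 ∧ Aᵀ * bbJ n + bbJ n * A = 0) ↔
      ∃ R S : Matrix (Fin n ⊕ Fin n) (Fin n ⊕ Fin n) ℝ,
        Rᵀ * Jstd n + Jstd n * R = 0 ∧ Sᵀ = S ∧
        A = Matrix.fromBlocks R S (-(Jstd n * S * Jstd n)) (-Rᵀ) :=
  doubly_hamiltonian_iff_general n A
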